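/- arXiv:0803.0727 — 8 statements merged into one kernel-verified Lean document; each statement's English description precedes it below -/
import Mathlib

section
/- Let ξ be a nonzero centered real random variable with finite p-th moment, p ∈ (1,∞). Set c = E|ξ|/(E|ξ|^p)^{1/p}. Then P(ξ > 0) ≥ (c/2)^{p/(p-1)} · (1 - ((c/2)^{-p/(p-1)} - 1)^{-(p-1)})^{-1/(p-1)}. -/
/-!
Let `A = {ξ > 0}` and `t = ℙ(A)`. Since `ξ` is centred, `A` and `Aᶜ` each carry half of `E|ξ|`,
and Hölder's inequality on each of them gives `t^{-(p-1)} + (1-t)^{-(p-1)} ≤ (c/2)^{-p}`.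
With `a = (c/2)^{p/(p-1)}` the first term alone forces `t > a`, so the second is at least
`(1-a)^{-(p-1)}`; solving for `t` gives the bound.
-/

open MeasureTheory ProbabilityTheory Real

theorem rpow_setIntegral_abs_le {α : Type*} [MeasurableSpace α] {μ : Measure α}
    [IsFiniteMeasure μ] {f : α → ℝ} {p : ℝ} (hp : 1 < p) (S : Set α)
    (hf : AEStronglyMeasurable f μ) (hfp : Integrable (fun x => |f x| ^ p) μ) :
    (∫ x in S, |f x| ∂μ) ^ p ≤ (∫ x in S, |f x| ^ p ∂μ) * μ.real S ^ (p - 1) := by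
  have hpq : p.HolderConjugate (p / (p - 1)) := .conjExponent hp
  have hf_memLp : MemLp f (ENNReal.ofReal p) (μ.restrict S) := by
    refine (integrable_norm_rpow_iff hf.restrict (by simpa using hpq.pos)
      ENNReal.ofReal_ne_top).mp ?_
    simpa [ENNReal.toReal_ofReal hpq.nonneg] using hfp.restrict
  have holder := integral_mul_le_Lp_mul_Lq_of_nonneg hpq (ae_of_all _ fun x => abs_nonneg (f x))
    (ae_of_all _ fun _ => zero_le_one) hf_memLp.abs (memLp_const 1)
  simp only [mul_one, one_rpow, integral_const, smul_eq_mul, measureReal_restrict_apply_univ]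
    at holder
  have hI : 0 ≤ ∫ x in S, |f x| ^ p ∂μ := integral_nonneg fun x => by positivity
  calc (∫ x in S, |f x| ∂μ) ^ p
      ≤ ((∫ x in S, |f x| ^ p ∂μ) ^ (1 / p) * μ.real S ^ (1 / (p / (p - 1)))) ^ p :=
        rpow_le_rpow (integral_nonneg fun x => abs_nonneg _) holder hpq.nonneg
    _ = (∫ x in S, |f x| ^ p ∂μ) * μ.real S ^ (p - 1) := by
        rw [mul_rpow (by positivity) (by positivity), ← rpow_mul hI, ← rpow_mul measureReal_nonneg,
          one_div_mul_cancel hpq.ne_zero, rpow_one]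
        field_simp

theorem setIntegral_pos_abs_eq_setIntegral_compl {α : Type*} [MeasurableSpace α] {μ : Measure α}
    {f : α → ℝ} (hf : Measurable f) (hint : Integrable f μ) (h0 : ∫ x, f x ∂μ = 0) :
    ∫ x in {x | 0 < f x}, |f x| ∂μ = ∫ x in {x | 0 < f x}ᶜ, |f x| ∂μ := by
  have hA : MeasurableSet {x | 0 < f x} := measurableSet_lt measurable_const hf
  have hsplit := integral_add_compl hA hint
  rw [setIntegral_congr_fun hA fun x hx => abs_of_pos hx,
    setIntegral_congr_fun hA.compl fun x (hx : ¬0 < f x) => abs_of_nonpos (not_lt.mp hx),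
    integral_neg]
  linarith

theorem pos_and_rpow_neg_le_div_of_le_mul_rpow {K u t s : ℝ} (hK : 0 < K) (hs : 0 < s)
    (ht : 0 ≤ t) (h : K ≤ u * t ^ s) : 0 < t ∧ t ^ (-s) ≤ u / K := by
  have ht₀ : 0 < t := ht.lt_of_ne <| by
    rintro rfl
    rw [zero_rpow hs.ne', mul_zero] at h
    linarith
  refine ⟨ht₀, ?_⟩
  rw [rpow_neg ht, le_div_iff₀ hK, inv_mul_le_iff₀ (rpow_pos_of_pos ht₀ s)]
  linarith

theorem measureReal_setOf_pos_rpow_neg_add_le {Ω : Type*} [MeasurableSpace Ω] {μ : Measure Ω}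
    [IsProbabilityMeasure μ] {f : Ω → ℝ} {p : ℝ} (hp : 1 < p) (hf : Measurable f)
    (hint : Integrable f μ) (hintp : Integrable (fun x => |f x| ^ p) μ)
    (h0 : ∫ x, f x ∂μ = 0) (hnz : 0 < ∫ x, |f x| ∂μ) :
    0 < μ.real {x | 0 < f x} ∧ μ.real {x | 0 < f x} < 1 ∧
      μ.real {x | 0 < f x} ^ (-(p - 1)) + (1 - μ.real {x | 0 < f x}) ^ (-(p - 1))
        ≤ (∫ x, |f x| ^ p ∂μ) / ((∫ x, |f x| ∂μ) / 2) ^ p := by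
  set A := {x | 0 < f x}
  have hA : MeasurableSet A := measurableSet_lt measurable_const hf
  have hm_compl := setIntegral_pos_abs_eq_setIntegral_compl hf hint h0
  have hm_half : (∫ x, |f x| ∂μ) / 2 = ∫ x in A, |f x| ∂μ := by
    rw [← integral_add_compl hA hint.abs, ← hm_compl, add_self_div_two]
  have hK : 0 < (∫ x in A, |f x| ∂μ) ^ p := rpow_pos_of_pos (by linarith) p
  obtain ⟨ht₀, hu⟩ := pos_and_rpow_neg_le_div_of_le_mul_rpow hK (sub_pos.mpr hp)
    measureReal_nonneg (rpow_setIntegral_abs_le hp A hf.aestronglyMeasurable hintp)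
  obtain ⟨ht₁, hv⟩ := pos_and_rpow_neg_le_div_of_le_mul_rpow hK (sub_pos.mpr hp)
    measureReal_nonneg (hm_compl ▸ rpow_setIntegral_abs_le hp Aᶜ hf.aestronglyMeasurable hintp)
  rw [probReal_compl_eq_one_sub hA] at ht₁ hv
  refine ⟨ht₀, sub_pos.mp ht₁, ?_⟩
  rw [hm_half, ← integral_add_compl hA hintp, add_div]
  exact add_le_add hu hv

theorem le_of_rpow_neg_add_one_sub_rpow_neg_le {s a t : ℝ} (hs : 0 < s) (ha : 0 < a)
    (ht₀ : 0 < t) (ht₁ : t < 1) (h : t ^ (-s) + (1 - t) ^ (-s) ≤ a ^ (-s)) :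
    a * (1 - (a⁻¹ - 1) ^ (-s)) ^ (-(1 / s)) ≤ t := by
  have hs' : -s < 0 := neg_neg_of_pos hs
  have hat : a < t := (rpow_lt_rpow_iff_of_neg ht₀ ha hs').mp <| by
    linarith [rpow_pos_of_pos (sub_pos.mpr ht₁) (-s)]
  set D := a ^ (-s) - (1 - a) ^ (-s) with hD_def
  have htD : t ^ (-s) ≤ D := by
    linarith [rpow_lt_rpow_of_neg (sub_pos.mpr ht₁) (by linarith : 1 - t < 1 - a) hs']
  have hD : 0 < D := (rpow_pos_of_pos ht₀ _).trans_le htD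
  have hbase : 1 - (a⁻¹ - 1) ^ (-s) = a ^ s * D := by
    rw [show a⁻¹ - 1 = (1 - a) / a by field_simp, div_rpow (by linarith) ha.le, hD_def,
      rpow_neg ha.le]
    field_simp [(rpow_pos_of_pos ha s).ne']
  have hroot : (a ^ s) ^ (-(1 / s)) = a⁻¹ := by
    rw [← rpow_mul ha.le, show s * -(1 / s) = -1 by field_simp, rpow_neg_one]
  rw [hbase, mul_rpow (rpow_pos_of_pos ha s).le hD.le, hroot, ← mul_assoc, mul_inv_cancel₀ ha.ne',
    one_mul, show -(1 / s) = (-s)⁻¹ by rw [one_div, neg_inv], rpow_inv_le_iff_of_neg hD ht₀ hs']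
  exact htD

theorem stmt2 {Ω : Type*} [MeasureSpace Ω] [IsProbabilityMeasure (ℙ : Measure Ω)]
    (ξ : Ω → ℝ) (p : ℝ) (hp : 1 < p) (hmeas : Measurable ξ)
    (hint : Integrable ξ) (hintp : Integrable (fun ω => |ξ ω| ^ p))
    (hmean : (∫ ω, ξ ω) = 0) (hnz : 0 < ∫ ω, |ξ ω|)
    (c : ℝ) (hc : c = (∫ ω, |ξ ω|) / (∫ ω, |ξ ω| ^ p) ^ (1 / p)) :
    ENNReal.ofReal ((c / 2) ^ (p / (p - 1)) *
        (1 - ((c / 2) ^ (-(p / (p - 1))) - 1) ^ (-(p - 1))) ^ (-(1 / (p - 1))))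
      ≤ ℙ {ω | 0 < ξ ω} := by
  obtain ⟨ht₀, ht₁, hsum⟩ := measureReal_setOf_pos_rpow_neg_add_le hp hmeas hint hintp hmean hnz
  set m := (∫ ω, |ξ ω|) / 2
  set M := ∫ ω, |ξ ω| ^ p
  have hm : 0 < m := by positivity
  have hM : 0 < M := (div_pos_iff_of_pos_right (rpow_pos_of_pos hm p)).mp <|
    (add_pos (rpow_pos_of_pos ht₀ _) (rpow_pos_of_pos (sub_pos.mpr ht₁) _)).trans_le hsum
  have hc2 : c / 2 = m / M ^ (1 / p) := by rw [hc]; ring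
  have hc2_pos : 0 < c / 2 := by rw [hc2]; positivity
  have hc2_rpow : ((c / 2) ^ (p / (p - 1))) ^ (-(p - 1)) = M / m ^ p := by
    rw [← rpow_mul hc2_pos.le, show p / (p - 1) * -(p - 1) = -p by
        field_simp [(sub_pos.mpr hp).ne'],
      rpow_neg hc2_pos.le, hc2, div_rpow hm.le (by positivity), ← rpow_mul hM.le,
      one_div_mul_cancel (by linarith), rpow_one, inv_div]
  rw [rpow_neg hc2_pos.le (p / (p - 1)), ENNReal.ofReal_le_iff_le_toReal (measure_ne_top _ _),
    ← Measure.real_def]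
  exact le_of_rpow_neg_add_one_sub_rpow_neg_le (sub_pos.mpr hp) (by positivity) ht₀ ht₁
    (hc2_rpow ▸ hsum)
end

section
/- Let ξ be a nonzero centered real random variable with finite second moment. Then P(ξ > 0) ≥ 1/2 − (1/2)·√(1 − (E|ξ|)²/E(ξ²)). -/
/-! With `p = P(ξ > 0)`, centering gives `E[ξ; ξ > 0] = E|ξ| / 2`, and this is also the
covariance `E[ξ (1_{ξ > 0} - p)]`. Cauchy–Schwarz bounds it by `√(E ξ² · p (1 - p))`, so
`(E|ξ|)² / E ξ² ≤ 4 p (1 - p) = 1 - (1 - 2p)²`, which rearranges to the claim. -/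

open MeasureTheory ProbabilityTheory Real

section
variable {α : Type*} [MeasurableSpace α] {μ : Measure α}

theorem sq_integral_mul_le_integral_sq_mul_integral_sq {f g : α → ℝ}
    (hf : MemLp f 2 μ) (hg : MemLp g 2 μ) :
    (∫ a, f a * g a ∂μ) ^ 2 ≤ (∫ a, f a ^ 2 ∂μ) * ∫ a, g a ^ 2 ∂μ := by
  have two : ENNReal.ofReal 2 = 2 := by norm_num
  have holder := integral_mul_le_Lp_mul_Lq_of_nonneg Real.HolderConjugate.two_two
    (Filter.Eventually.of_forall fun a => abs_nonneg (f a))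
    (Filter.Eventually.of_forall fun a => abs_nonneg (g a)) (two ▸ hf.abs) (two ▸ hg.abs)
  simp only [rpow_two, sq_abs] at holder
  rw [← sqrt_eq_rpow, ← sqrt_eq_rpow, ← sqrt_mul (integral_nonneg fun a => sq_nonneg (f a))]
    at holder
  have hle : |∫ a, f a * g a ∂μ| ≤ ∫ a, |f a| * |g a| ∂μ := by
    simpa only [abs_mul] using abs_integral_le_integral_abs (f := fun a => f a * g a)
  calc (∫ a, f a * g a ∂μ) ^ 2 ≤ √((∫ a, f a ^ 2 ∂μ) * ∫ a, g a ^ 2 ∂μ) ^ 2 :=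
        sq_le_sq.mpr ((hle.trans holder).trans (le_abs_self _))
    _ = _ := sq_sqrt (mul_nonneg (integral_nonneg fun a => sq_nonneg _)
        (integral_nonneg fun a => sq_nonneg _))

theorem setIntegral_pos_eq_half_integral_add_integral_abs {f : α → ℝ} (hfm : Measurable f)
    (hf : Integrable f μ) :
    ∫ a in {a | 0 < f a}, f a ∂μ = ((∫ a, f a ∂μ) + ∫ a, |f a| ∂μ) / 2 := by
  rw [← integral_add hf hf.abs, ← integral_div,
    ← integral_indicator (measurableSet_lt measurable_const hfm)]
  congr 1 with a
  by_cases ha : 0 < f a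
  · simp [Set.indicator_of_mem (show a ∈ {a | 0 < f a} from ha), abs_of_pos ha]
  · simp [Set.indicator_of_notMem (show a ∉ {a | 0 < f a} from ha), abs_of_nonpos (not_lt.mp ha)]

end

section
variable {Ω : Type*} [MeasurableSpace Ω] {μ : Measure Ω} [IsProbabilityMeasure μ]

theorem integral_indicator_one_sub_measureReal_sq {s : Set Ω} (hs : MeasurableSet s) :
    ∫ ω, (s.indicator 1 ω - μ.real s) ^ 2 ∂μ = μ.real s * (1 - μ.real s) := by
  have hpt : ∀ ω, (s.indicator 1 ω - μ.real s) ^ 2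
      = (1 - 2 * μ.real s) * s.indicator 1 ω + μ.real s ^ 2 := by
    intro ω
    by_cases hω : ω ∈ s
    · simp [hω]; ring
    · simp [hω]
  simp_rw [hpt]
  have hint : Integrable (s.indicator 1) μ := (integrable_const (1 : ℝ)).indicator hs
  rw [integral_add (hint.const_mul _) (integrable_const _), integral_const_mul,
    integral_indicator_one hs, integral_const, probReal_univ, one_smul]
  ring

theorem sq_setIntegral_le_integral_sq_mul_measureReal {f : Ω → ℝ} (hf : MemLp f 2 μ)
    (hmean : ∫ ω, f ω ∂μ = 0) {s : Set Ω} (hs : MeasurableSet s) :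
    (∫ ω in s, f ω ∂μ) ^ 2 ≤ (∫ ω, f ω ^ 2 ∂μ) * (μ.real s * (1 - μ.real s)) := by
  have hcentered : MemLp (fun ω => s.indicator 1 ω - μ.real s) 2 μ :=
    (memLp_indicator_const 2 hs 1 (Or.inr (measure_ne_top μ s))).sub (memLp_const _)
  have hf1 : Integrable f μ := hf.integrable one_le_two
  have hpt : ∀ ω,
      f ω * (s.indicator 1 ω - μ.real s) = s.indicator f ω - μ.real s * f ω := by
    intro ω
    by_cases hω : ω ∈ s <;> simp [hω, mul_sub, mul_comm]
  have hcov : ∫ ω in s, f ω ∂μ = ∫ ω, f ω * (s.indicator 1 ω - μ.real s) ∂μ := by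
    simp_rw [hpt]
    rw [integral_sub (hf1.indicator hs) (hf1.const_mul _), integral_indicator hs,
      integral_const_mul, hmean, mul_zero, sub_zero]
  rw [hcov, ← integral_indicator_one_sub_measureReal_sq hs]
  exact sq_integral_mul_le_integral_sq_mul_integral_sq hf hcentered

end

theorem half_sub_sqrt_le_of_sq_le {A B p : ℝ} (hB : 0 < B)
    (h : (A / 2) ^ 2 ≤ B * (p * (1 - p))) :
    1 / 2 - √(1 - A ^ 2 / B) / 2 ≤ p := by
  have hsq : (1 - 2 * p) ^ 2 ≤ 1 - A ^ 2 / B := by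
    rw [le_sub_comm, div_le_iff₀ hB]
    nlinarith
  have := (le_abs_self _).trans (abs_le_sqrt hsq)
  linarith

theorem stmt3 {Ω : Type*} [MeasureSpace Ω] [IsProbabilityMeasure (ℙ : Measure Ω)]
    (ξ : Ω → ℝ) (hmeas : Measurable ξ)
    (hint : Integrable ξ) (hint2 : Integrable (fun ω => (ξ ω) ^ 2))
    (hmean : (∫ ω, ξ ω) = 0) (hnz : 0 < ∫ ω, (ξ ω) ^ 2) :
    ENNReal.ofReal (1 / 2 - Real.sqrt (1 - (∫ ω, |ξ ω|) ^ 2 / (∫ ω, (ξ ω) ^ 2)) / 2)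
      ≤ ℙ {ω | 0 < ξ ω} := by
  have hpos := setIntegral_pos_eq_half_integral_add_integral_abs hmeas hint
  rw [hmean, zero_add] at hpos
  have hcs := sq_setIntegral_le_integral_sq_mul_measureReal
    ((memLp_two_iff_integrable_sq hmeas.aestronglyMeasurable).2 hint2) hmean
    (measurableSet_lt measurable_const hmeas : MeasurableSet {ω | 0 < ξ ω})
  rw [hpos] at hcs
  exact ENNReal.ofReal_le_of_le_toReal (half_sub_sqrt_le_of_sq_le hnz hcs)
end

section
/- The lower bound P(ξ ≥ 0) ≥ 1/2 − (1/2)√(1 − c²) for centered ξ with E|ξ| = c and Eξ² = 1 is sharp: for every c ∈ (0,1] there exists a centered two-valued random variable ξ with Eξ² = 1, E|ξ| = c, and P(ξ ≤ 0) = 1/2 − (1/2)√(1 − c²). -/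
open MeasureTheory ProbabilityTheory Real

lemma two_point_integral (p q : ℝ) (hp : 0 ≤ p) (hq : 0 ≤ q) (x₁ x₂ : ℝ) (f : ℝ → ℝ) :
    ∫ x, f x ∂(ENNReal.ofReal p • Measure.dirac x₁ + ENNReal.ofReal q • Measure.dirac x₂)
      = p * f x₁ + q * f x₂ := by
  have hint : ∀ a : ℝ, Integrable f (Measure.dirac a) := fun a =>
    (integrable_const (f a)).congr
      (by rw [ae_dirac_eq]; exact Filter.eventually_pure.2 rfl)
  rw [integral_add_measure ((hint x₁).smul_measure ENNReal.ofReal_ne_top)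
      ((hint x₂).smul_measure ENNReal.ofReal_ne_top),
    integral_smul_measure, integral_smul_measure, integral_dirac, integral_dirac,
    ENNReal.toReal_ofReal hp, ENNReal.toReal_ofReal hq, smul_eq_mul, smul_eq_mul]

theorem stmt4 (c : ℝ) (hc : c ∈ Set.Ioc (0 : ℝ) 1) :
    ∃ (μ : Measure ℝ) (_ : IsProbabilityMeasure μ) (x₁ x₂ : ℝ), x₁ ≠ x₂ ∧
      μ (({x₁, x₂} : Set ℝ)ᶜ) = 0 ∧
      (∫ x, x ∂μ) = 0 ∧ (∫ x, x ^ 2 ∂μ) = 1 ∧ (∫ x, |x| ∂μ) = c ∧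
      μ {x | x ≤ 0} = ENNReal.ofReal (1 / 2 - Real.sqrt (1 - c ^ 2) / 2) := by
  obtain ⟨hc0, hc1⟩ := hc
  set s := Real.sqrt (1 - c ^ 2) with hs
  have hc2 : 0 ≤ 1 - c ^ 2 := by nlinarith
  have hs2 : s ^ 2 = 1 - c ^ 2 := Real.sq_sqrt hc2
  have hs0 : 0 ≤ s := Real.sqrt_nonneg _
  have hs1 : s < 1 := by nlinarith [Real.sq_sqrt hc2]
  set p := (1 - s) / 2 with hpdef
  set q := (1 + s) / 2 with hqdef
  have hp : 0 < p := by simp only [hpdef]; linarith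
  have hq : 0 < q := by simp only [hqdef]; linarith
  have hpq : p * q = c ^ 2 / 4 := by simp only [hpdef, hqdef]; nlinarith
  set a := Real.sqrt p with ha
  set b := Real.sqrt q with hb
  have ha0 : 0 < a := Real.sqrt_pos.2 hp
  have hb0 : 0 < b := Real.sqrt_pos.2 hq
  have ha2 : a ^ 2 = p := Real.sq_sqrt hp.le
  have hb2 : b ^ 2 = q := Real.sq_sqrt hq.le
  have hab : a * b = c / 2 := by
    rw [ha, hb, ← Real.sqrt_mul hp.le, hpq]
    rw [show c ^ 2 / 4 = (c / 2) ^ 2 by ring, Real.sqrt_sq (by linarith)]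
  set x₁ := -(b / a) with hx1
  set x₂ := a / b with hx2
  have hx1neg : x₁ < 0 := by
    simp only [hx1, neg_lt_zero]; positivity
  have hx2pos : 0 < x₂ := by positivity
  refine ⟨ENNReal.ofReal p • Measure.dirac x₁ + ENNReal.ofReal q • Measure.dirac x₂, ?_,
    x₁, x₂, by linarith, ?_, ?_, ?_, ?_, ?_⟩
  · constructor
    rw [Measure.add_apply, Measure.smul_apply, Measure.smul_apply, Measure.dirac_apply_of_mem
      (Set.mem_univ _), Measure.dirac_apply_of_mem (Set.mem_univ _), smul_eq_mul, smul_eq_mul,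
      mul_one, mul_one, ← ENNReal.ofReal_add hp.le hq.le]
    rw [hpdef, hqdef]; norm_num; ring
  · rw [Measure.add_apply, Measure.smul_apply, Measure.smul_apply,
      Measure.dirac_apply' _ (((measurableSet_singleton x₂).insert x₁).compl), Measure.dirac_apply' _ (((measurableSet_singleton x₂).insert x₁).compl)]
    simp
  · rw [two_point_integral p q hp.le hq.le x₁ x₂ (fun x => x)]
    have : p * x₁ = -(a * b) := by
      rw [hx1, ← ha2]; field_simp
    have h2 : q * x₂ = a * b := by
      rw [hx2, ← hb2]; field_simp
    rw [this, h2]; ring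
  · rw [two_point_integral p q hp.le hq.le x₁ x₂ (fun x => x ^ 2)]
    have h1 : x₁ ^ 2 = q / p := by rw [hx1, ← ha2, ← hb2]; field_simp
    have h2 : x₂ ^ 2 = p / q := by rw [hx2, ← ha2, ← hb2]; field_simp
    rw [h1, h2]
    field_simp
    rw [hpdef, hqdef]; ring
  · rw [two_point_integral p q hp.le hq.le x₁ x₂ (fun x => |x|)]
    have h1 : |x₁| = b / a := by rw [abs_of_neg hx1neg, hx1, neg_neg]
    have h2 : |x₂| = a / b := by rw [abs_of_pos hx2pos]
    rw [h1, h2, ← ha2, ← hb2]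
    field_simp
    nlinarith [hab]
  · have hset : {x : ℝ | x ≤ 0} = Set.Iic 0 := rfl
    rw [Measure.add_apply, Measure.smul_apply, Measure.smul_apply, hset,
      Measure.dirac_apply' _ measurableSet_Iic, Measure.dirac_apply' _ measurableSet_Iic]
    have h1 : x₁ ∈ Set.Iic (0:ℝ) := hx1neg.le
    have h2 : x₂ ∉ Set.Iic (0:ℝ) := not_le.2 hx2pos
    rw [Set.indicator_of_mem h1, Set.indicator_of_notMem h2]
    simp only [Pi.one_apply, smul_eq_mul, mul_one, mul_zero, add_zero]
    congr 1
    rw [hpdef]; ring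
end

section
/- Let ξ be a centered real random variable with Eξ² = 1 and Eξ⁴ ≤ τ. Then P(ξ > 0) ≥ (2√3 − 3)/τ. -/
/-!
The indicator of `(0, ∞)` dominates the quartic `q(t) = (2√3 - 3)(4/9)(2t + 3t² - t⁴)`:
for `t ≤ 0` one has `2t + 3t² - t⁴ = t(t + 1)²(2 - t) ≤ 0`, and for `t > 0` the difference
`1 - q` has a double root at `t = (1 + √3)/2`, which is where the constant `2√3 - 3` comes from.
Applying this to `ξ/σ` with `σ² = 2τ/3` and taking expectations, the linear term vanishes since
`Eξ = 0` and the even part is at least `(2√3 - 3)(2/τ - Eξ⁴/τ²) ≥ (2√3 - 3)/τ`.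
-/

open MeasureTheory ProbabilityTheory Real

lemma integrable_sq_of_integrable_pow_four {Ω : Type*} [MeasurableSpace Ω] {μ : Measure Ω}
    [IsFiniteMeasure μ] {f : Ω → ℝ} (hf : AEStronglyMeasurable f μ)
    (h4 : Integrable (fun ω => f ω ^ 4) μ) : Integrable (fun ω => f ω ^ 2) μ := by
  have h4' : Integrable (fun ω => ‖f ω‖ ^ 4) μ := by
    simpa [Real.norm_eq_abs, Even.pow_abs (by decide : Even 4)] using h4
  simpa [Real.norm_eq_abs, sq_abs] using integrable_norm_pow_of_le (p := 2) hf (by norm_num) h4'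

lemma two_mul_sqrt_three_sub_three_nonneg : 0 ≤ 2 * √3 - 3 := by
  nlinarith [Real.sq_sqrt (show (0 : ℝ) ≤ 3 by norm_num), Real.sqrt_nonneg 3]

lemma quartic_le_indicator_Ioi (t : ℝ) :
    (2 * √3 - 3) * (4 / 9) * (2 * t + 3 * t ^ 2 - t ^ 4) ≤ (Set.Ioi 0).indicator 1 t := by
  have h3 : √3 ^ 2 = 3 := Real.sq_sqrt (by norm_num)
  have hK := two_mul_sqrt_three_sub_three_nonneg
  rcases lt_or_ge 0 t with ht | ht
  · rw [Set.indicator_of_mem (Set.mem_Ioi.mpr ht), Pi.one_apply]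
    have hgap : 1 - (2 * √3 - 3) * (4 / 9) * (2 * t + 3 * t ^ 2 - t ^ 4) =
        (2 * √3 - 3) * (4 / 9) * (t - (1 + √3) / 2) ^ 2 * ((t + (1 + √3) / 2) ^ 2 + (√3 - 1)) := by
      linear_combination (-1/4 - 4/3 * t - 2/3 * t ^ 2 - 1/18 * √3 + 8/9 * t * √3
        + 4/9 * t ^ 2 * √3 - 13/36 * √3 ^ 2 - 1/18 * √3 ^ 3) * h3
    have hgap_nonneg : 0 ≤ (2 * √3 - 3) * (4 / 9) * (t - (1 + √3) / 2) ^ 2 *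
        ((t + (1 + √3) / 2) ^ 2 + (√3 - 1)) := by
      have := sq_nonneg (t + (1 + √3) / 2)
      exact mul_nonneg (by positivity) (by linarith)
    linarith
  · rw [Set.indicator_of_notMem (Set.notMem_Ioi.mpr ht)]
    have hfactor : 2 * t + 3 * t ^ 2 - t ^ 4 = -(-t * (t + 1) ^ 2 * (2 - t)) := by ring
    rw [hfactor, mul_neg, neg_nonpos]
    have : 0 ≤ 2 - t := by linarith
    have : 0 ≤ -t := by linarith
    positivity

lemma exists_quartic_le_indicator_Ioi {τ : ℝ} (hτ : 0 < τ) :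
    ∃ b : ℝ, ∀ x : ℝ,
      b * x + (2 * √3 - 3) * (2 * x ^ 2 / τ - x ^ 4 / τ ^ 2) ≤ (Set.Ioi 0).indicator 1 x := by
  set σ := √(2 * τ / 3)
  have hσ : 0 < σ := Real.sqrt_pos.mpr (by positivity)
  have hσ2 : σ ^ 2 = 2 * τ / 3 := Real.sq_sqrt (by positivity)
  refine ⟨(2 * √3 - 3) * (8 / 9) / σ, fun x => ?_⟩
  have hscale : (2 * √3 - 3) * (8 / 9) / σ * x + (2 * √3 - 3) * (2 * x ^ 2 / τ - x ^ 4 / τ ^ 2) =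
      (2 * √3 - 3) * (4 / 9) * (2 * (x / σ) + 3 * (x / σ) ^ 2 - (x / σ) ^ 4) := by
    have hτσ : τ = 3 / 2 * σ ^ 2 := by linarith
    rw [hτσ]
    field_simp
    ring
  have hsign : (Set.Ioi 0).indicator (1 : ℝ → ℝ) (x / σ) = (Set.Ioi 0).indicator 1 x := by
    simp only [Set.indicator_apply, Set.mem_Ioi, div_pos_iff_of_pos_right hσ, Pi.one_apply]
  rw [hscale, ← hsign]
  exact quartic_le_indicator_Ioi _

theorem stmt5 {Ω : Type*} [MeasureSpace Ω] [IsProbabilityMeasure (ℙ : Measure Ω)]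
    (ξ : Ω → ℝ) (hmeas : Measurable ξ)
    (hint : Integrable ξ) (hint4 : Integrable (fun ω => (ξ ω) ^ 4))
    (hmean : (∫ ω, ξ ω) = 0) (h2 : (∫ ω, (ξ ω) ^ 2) = 1)
    (τ : ℝ) (h4 : (∫ ω, (ξ ω) ^ 4) ≤ τ) :
    ENNReal.ofReal ((2 * Real.sqrt 3 - 3) / τ) ≤ ℙ {ω | 0 < ξ ω} := by
  rcases le_or_gt τ 0 with hτ | hτ
  · rw [ENNReal.ofReal_of_nonpos
      (div_nonpos_of_nonneg_of_nonpos two_mul_sqrt_three_sub_three_nonneg hτ)]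
    exact bot_le
  obtain ⟨b, hb⟩ := exists_quartic_le_indicator_Ioi hτ
  have hint2 := integrable_sq_of_integrable_pow_four hint.aestronglyMeasurable hint4
  have hintEven : Integrable (fun ω => (2 * √3 - 3) * (2 * ξ ω ^ 2 / τ - ξ ω ^ 4 / τ ^ 2)) :=
    (((hint2.const_mul 2).div_const τ).sub (hint4.div_const _)).const_mul _
  have hmoment : ∫ ω, (b * ξ ω + (2 * √3 - 3) * (2 * ξ ω ^ 2 / τ - ξ ω ^ 4 / τ ^ 2)) =
      (2 * √3 - 3) * (2 / τ - (∫ ω, ξ ω ^ 4) / τ ^ 2) := by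
    rw [integral_add (hint.const_mul b) hintEven, integral_const_mul, integral_const_mul,
      integral_sub ((hint2.const_mul 2).div_const τ) (hint4.div_const _), integral_div,
      integral_div, integral_const_mul, hmean, h2]
    ring
  have hquartic : ∫ ω, (b * ξ ω + (2 * √3 - 3) * (2 * ξ ω ^ 2 / τ - ξ ω ^ 4 / τ ^ 2)) ≤
      (ℙ : Measure Ω).real {ω | 0 < ξ ω} := by
    have hA : MeasurableSet {ω | 0 < ξ ω} := hmeas measurableSet_Ioi
    rw [← integral_indicator_one hA]
    refine integral_mono ((hint.const_mul b).add hintEven) ((integrable_const 1).indicator hA)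
      fun ω => ?_
    exact (hb (ξ ω)).trans_eq (Set.indicator_comp_right (g := 1) ξ).symm
  have hfourth : (2 * √3 - 3) / τ ≤ (2 * √3 - 3) * (2 / τ - (∫ ω, ξ ω ^ 4) / τ ^ 2) := by
    have hm : (∫ ω, ξ ω ^ 4) / τ ^ 2 ≤ 1 / τ := by
      rw [div_le_div_iff₀ (by positivity) hτ]; nlinarith
    calc (2 * √3 - 3) / τ = (2 * √3 - 3) * (2 / τ - 1 / τ) := by ring
      _ ≤ _ := by gcongr; exact two_mul_sqrt_three_sub_three_nonneg
  exact ENNReal.ofReal_le_of_le_toReal (hfourth.trans (hmoment ▸ hquartic))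
end

section
/- Let ξ be a centered real random variable with Eξ² = 1 and Eξ⁴ = x where 1 ≤ x < (3√3)/2 − 3/2. Then P(ξ > 0) ≥ 1/2 − (1/2)·√((x−1)/(x+3)). -/
/-!
For `0 < a < 1` the extremal law is the centred two-point law on `{-a, a⁻¹}`: it has variance 1,
fourth moment `a² + a⁻² - 1` and mass `a² / (1 + a²)` on `(0, ∞)`. When `(1 + a²)² ≥ 3` there is a
quartic `Q ≤ 𝟙_(0,∞)` with nonpositive leading coefficient that touches the indicator at `-a` and
`a⁻¹`, namely `Q(t) = -κ (t + a)² (t² - 2at + γ) = 1 - κ (t - a⁻¹)² (t² + 2a⁻¹t + δ)`. Hence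
`P(ξ > 0) ≥ E Q(ξ)`, a combination of the first four moments equal to `a² / (1 + a²)` at the
extremal law. For `x > 1` take `a = (√(x + 3) - √(x - 1)) / 2`, so that `a⁻¹ ± a` are `√(x + 3)`
and `√(x - 1)`; the threshold on `x` is exactly `(1 + a²)² ≥ 3`. The case `x = 1` is the limit
`a → 1`.
-/

open MeasureTheory ProbabilityTheory Real Set Filter Topology

lemma MeasureTheory.Integrable.sq_of_pow_four {Ω : Type*} [MeasurableSpace Ω] {μ : Measure Ω}
    [IsFiniteMeasure μ] {ξ : Ω → ℝ} (hξ : AEStronglyMeasurable ξ μ)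
    (h4 : Integrable (fun ω => ξ ω ^ 4) μ) : Integrable (fun ω => ξ ω ^ 2) μ := by
  refine (h4.add (integrable_const 1)).mono' (hξ.pow 2) (ae_of_all _ fun ω => ?_)
  rw [Pi.add_apply, Real.norm_eq_abs, abs_of_nonneg (sq_nonneg _)]
  nlinarith [sq_nonneg (ξ ω ^ 2 - 1)]

lemma exists_quartic_le_indicator_Ioi_s6 {a : ℝ} (ha0 : 0 < a) (ha1 : a < 1)
    (ha : 3 ≤ (1 + a ^ 2) ^ 2) :
    ∃ c₀ c₁ c₂ c₄ : ℝ, c₄ ≤ 0 ∧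
      (∀ t, c₄ * t ^ 4 + c₂ * t ^ 2 + c₁ * t + c₀ ≤ (Ioi 0).indicator 1 t) ∧
      c₄ * (a ^ 2 + a⁻¹ ^ 2 - 1) + c₂ + c₀ = a ^ 2 / (1 + a ^ 2) := by
  have ha2 : 0 < 1 - a ^ 2 := by nlinarith
  set κ := a ^ 4 / ((1 - a ^ 2) * (1 + a ^ 2) ^ 3)
  set γ := ((1 + a ^ 2) ^ 2 - 3) / a ^ 2
  set δ := γ - 3 * a ^ 2 + 3 / a ^ 2
  have hκ : 0 ≤ κ := by positivity
  have hγ : 0 ≤ γ := div_nonneg (by linarith) (by positivity)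
  have hδ : 0 ≤ δ := by
    have : 3 * a ^ 2 ≤ 3 / a ^ 2 := by rw [le_div_iff₀ (by positivity)]; nlinarith
    simp only [δ]; linarith
  have hQ : ∀ t, 1 - κ * ((t - a⁻¹) ^ 2 * (t ^ 2 + 2 * a⁻¹ * t + δ))
      = -κ * ((t + a) ^ 2 * (t ^ 2 - 2 * a * t + γ)) := by
    intro t
    simp only [κ, γ, δ]
    field_simp
    ring
  refine ⟨-κ * a ^ 2 * γ, -2 * κ * a * (γ - a ^ 2), -κ * (γ - 3 * a ^ 2), -κ, by linarith,
    fun t => ?_, ?_⟩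
  · rw [show -κ * t ^ 4 + -κ * (γ - 3 * a ^ 2) * t ^ 2 + -2 * κ * a * (γ - a ^ 2) * t
        + -κ * a ^ 2 * γ = -κ * ((t + a) ^ 2 * (t ^ 2 - 2 * a * t + γ)) by ring]
    by_cases ht : t ∈ Ioi 0
    · rw [indicator_of_mem ht, Pi.one_apply, ← hQ]
      have : 0 ≤ t ^ 2 + 2 * a⁻¹ * t + δ := by have : (0 : ℝ) < t := ht; positivity
      nlinarith [mul_nonneg hκ (mul_nonneg (sq_nonneg (t - a⁻¹)) this)]
    · rw [indicator_of_notMem ht]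
      have : 0 ≤ t ^ 2 - 2 * a * t + γ := by
        have : t ≤ 0 := not_lt.1 ht
        nlinarith [sq_nonneg t]
      nlinarith [mul_nonneg hκ (mul_nonneg (sq_nonneg (t + a)) this)]
  · simp only [κ, γ]
    field_simp
    ring

lemma exists_twoPoint_atom_of_one_lt {x : ℝ} (hx1 : 1 < x) (hx2 : x ≤ 3 * √3 / 2 - 3 / 2) :
    ∃ a : ℝ, 0 < a ∧ a < 1 ∧ 3 ≤ (1 + a ^ 2) ^ 2 ∧ a ^ 2 + a⁻¹ ^ 2 - 1 = x ∧
      a ^ 2 / (1 + a ^ 2) = 1 / 2 - √((x - 1) / (x + 3)) / 2 := by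
  set r := √(x + 3)
  set s := √(x - 1)
  have hr2 : r ^ 2 = x + 3 := sq_sqrt (by linarith)
  have hs2 : s ^ 2 = x - 1 := sq_sqrt (by linarith)
  have hs : 0 < s := sqrt_pos.2 (by linarith)
  have hsr : s < r := sqrt_lt_sqrt (by linarith) (by linarith)
  have hquad : 2 * x ^ 2 + 6 * x ≤ 9 := by
    have h3 : √3 ^ 2 = 3 := sq_sqrt (by norm_num)
    nlinarith [sqrt_nonneg 3]
  have hinv : ((r - s) / 2)⁻¹ = (r + s) / 2 := by
    refine inv_eq_of_mul_eq_one_right ?_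
    nlinarith
  refine ⟨(r - s) / 2, by linarith, by nlinarith, ?_, ?_, ?_⟩
  · have h1a : 1 + ((r - s) / 2) ^ 2 = (r - s) / 2 * r := by nlinarith
    have hu : (x + 3) * (r * s) ≤ x ^ 2 + 4 * x - 3 := by
      have hrs : (r * s) ^ 2 = (x + 3) * (x - 1) := by rw [mul_pow, hr2, hs2]
      refine le_of_sq_le_sq ?_ (by nlinarith)
      nlinarith
    rw [h1a]
    nlinarith
  · rw [hinv]; nlinarith
  · rw [sqrt_div' _ (by linarith : (0 : ℝ) ≤ x + 3)]
    have : 0 < r := by linarith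
    field_simp
    nlinarith

section Bounds

variable {Ω : Type*} [MeasurableSpace Ω] {μ : Measure Ω} [IsProbabilityMeasure μ] {ξ : Ω → ℝ}

lemma integral_quartic_le_measureReal_pos (hξ : Measurable ξ) (h1 : Integrable ξ μ)
    (h4 : Integrable (fun ω => ξ ω ^ 4) μ) {c₀ c₁ c₂ c₄ : ℝ}
    (hQ : ∀ t, c₄ * t ^ 4 + c₂ * t ^ 2 + c₁ * t + c₀ ≤ (Ioi 0).indicator 1 t) :
    c₄ * ∫ ω, ξ ω ^ 4 ∂μ + c₂ * ∫ ω, ξ ω ^ 2 ∂μ + c₁ * ∫ ω, ξ ω ∂μ + c₀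
      ≤ μ.real {ω | 0 < ξ ω} := by
  have h2 := h4.sq_of_pow_four h1.aestronglyMeasurable
  have hint : Integrable (fun ω => c₄ * ξ ω ^ 4 + c₂ * ξ ω ^ 2 + c₁ * ξ ω + c₀) μ :=
    (((h4.const_mul c₄).add (h2.const_mul c₂)).add (h1.const_mul c₁)).add (integrable_const c₀)
  have hS : MeasurableSet {ω | 0 < ξ ω} := hξ measurableSet_Ioi
  calc c₄ * ∫ ω, ξ ω ^ 4 ∂μ + c₂ * ∫ ω, ξ ω ^ 2 ∂μ + c₁ * ∫ ω, ξ ω ∂μ + c₀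
      = ∫ ω, c₄ * ξ ω ^ 4 + c₂ * ξ ω ^ 2 + c₁ * ξ ω + c₀ ∂μ := by
        rw [integral_add _ (integrable_const _), integral_add, integral_add, integral_const_mul,
          integral_const_mul, integral_const_mul]
        · simp
        all_goals fun_prop
    _ ≤ ∫ ω, {ω | 0 < ξ ω}.indicator 1 ω ∂μ :=
        integral_mono hint ((integrable_const 1).indicator hS) fun ω => hQ (ξ ω)
    _ = μ.real {ω | 0 < ξ ω} := integral_indicator_one hS

theorem le_measureReal_pos_of_integral_pow_four_le (hξ : Measurable ξ) (h1 : Integrable ξ μ)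
    (h4 : Integrable (fun ω => ξ ω ^ 4) μ) (hmean : ∫ ω, ξ ω ∂μ = 0)
    (hvar : ∫ ω, ξ ω ^ 2 ∂μ = 1) {a : ℝ} (ha0 : 0 < a) (ha1 : a < 1)
    (ha : 3 ≤ (1 + a ^ 2) ^ 2) (hkurt : ∫ ω, ξ ω ^ 4 ∂μ ≤ a ^ 2 + a⁻¹ ^ 2 - 1) :
    a ^ 2 / (1 + a ^ 2) ≤ μ.real {ω | 0 < ξ ω} := by
  obtain ⟨c₀, c₁, c₂, c₄, hc₄, hQ, hval⟩ := exists_quartic_le_indicator_Ioi_s6 ha0 ha1 ha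
  have := integral_quartic_le_measureReal_pos hξ h1 h4 hQ
  rw [hmean, hvar] at this
  nlinarith [mul_le_mul_of_nonpos_left hkurt hc₄]

theorem half_le_measureReal_pos_of_integral_pow_four_le_one (hξ : Measurable ξ)
    (h1 : Integrable ξ μ) (h4 : Integrable (fun ω => ξ ω ^ 4) μ) (hmean : ∫ ω, ξ ω ∂μ = 0)
    (hvar : ∫ ω, ξ ω ^ 2 ∂μ = 1) (hkurt : ∫ ω, ξ ω ^ 4 ∂μ ≤ 1) :
    1 / 2 ≤ μ.real {ω | 0 < ξ ω} := by
  have hlim : Tendsto (fun a : ℝ => a ^ 2 / (1 + a ^ 2)) (𝓝[<] 1) (𝓝 (1 / 2)) := by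
    have : ContinuousAt (fun a : ℝ => a ^ 2 / (1 + a ^ 2)) 1 := by fun_prop (disch := positivity)
    simpa [ContinuousAt, show (1 : ℝ) / (1 + 1) = 1 / 2 by norm_num] using
      this.tendsto.mono_left nhdsWithin_le_nhds
  refine le_of_tendsto hlim ?_
  filter_upwards [Ioo_mem_nhdsLT (by norm_num : (9 / 10 : ℝ) < 1)] with a ⟨ha0, ha1⟩
  have : a * a⁻¹ = 1 := mul_inv_cancel₀ (by positivity)
  have : 81 / 100 < a ^ 2 := by nlinarith
  exact le_measureReal_pos_of_integral_pow_four_le hξ h1 h4 hmean hvar (by linarith) ha1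
    (by nlinarith) (hkurt.trans (by nlinarith [sq_nonneg (a - a⁻¹)]))

end Bounds

theorem stmt6 {Ω : Type*} [MeasureSpace Ω] [IsProbabilityMeasure (ℙ : Measure Ω)]
    (ξ : Ω → ℝ) (hmeas : Measurable ξ)
    (hint : Integrable ξ) (hint4 : Integrable (fun ω => (ξ ω) ^ 4))
    (hmean : (∫ ω, ξ ω) = 0) (h2 : (∫ ω, (ξ ω) ^ 2) = 1)
    (x : ℝ) (hx1 : 1 ≤ x) (hx2 : x < 3 * Real.sqrt 3 / 2 - 3 / 2)
    (h4 : (∫ ω, (ξ ω) ^ 4) = x) :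
    ENNReal.ofReal (1 / 2 - Real.sqrt ((x - 1) / (x + 3)) / 2) ≤ ℙ {ω | 0 < ξ ω} := by
  refine ENNReal.ofReal_le_of_le_toReal ?_
  rw [← measureReal_def]
  rcases hx1.eq_or_lt with rfl | hx
  · rw [sub_self, zero_div, sqrt_zero, zero_div, sub_zero]
    exact half_le_measureReal_pos_of_integral_pow_four_le_one hmeas hint hint4 hmean h2 h4.le
  · obtain ⟨a, ha0, ha1, ha, hax, hbound⟩ := exists_twoPoint_atom_of_one_lt hx hx2.le
    rw [← hbound]
    exact le_measureReal_pos_of_integral_pow_four_le hmeas hint hint4 hmean h2 ha0 ha1 ha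
      (h4.trans hax.symm).le
end

section
/- For every x ≥ (3√3)/2 − 3/2 and every ε' > 0, there exists a centered random variable ξ taking three values with Eξ² = 1, Eξ⁴ ≤ x + ε', and P(ξ ≥ 0) = (2√3 − 3)/x. -/
open MeasureTheory ProbabilityTheory Real Filter Topology

/-!
The extremal law puts the masses `(3/2 - √3/2)/x`, `1 - (3√3/2 - 3/2)/x`, `(2√3 - 3)/x` at
`-(√3 - 1)`, `0`, `1`; once rescaled to unit variance its fourth moment is exactly `x`.
The middle atom has to be strictly negative, so it is moved to `-t`, the positive atom is
shifted to keep the mean zero, and the law is rescaled to unit variance again. The normalized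
fourth moment `E ξ⁴ / (E ξ²)²` depends continuously on `t`, so a small `t > 0` costs less
than `ε'`.
-/

noncomputable def threePoint (p q r a b c : ℝ) : Measure ℝ :=
  ENNReal.ofReal p • Measure.dirac a + ENNReal.ofReal q • Measure.dirac b +
    ENNReal.ofReal r • Measure.dirac c

section threePoint

variable {p q r : ℝ} {a b c : ℝ}

theorem threePoint_apply (S : Set ℝ) :
    threePoint p q r a b c S = ENNReal.ofReal p * S.indicator 1 a +
      ENNReal.ofReal q * S.indicator 1 b + ENNReal.ofReal r * S.indicator 1 c := by
  simp only [threePoint, Measure.add_apply, Measure.smul_apply, smul_eq_mul, Measure.dirac_apply]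

theorem isProbabilityMeasure_threePoint (hp : 0 ≤ p) (hq : 0 ≤ q) (hr : 0 ≤ r)
    (h : p + q + r = 1) : IsProbabilityMeasure (threePoint p q r a b c) := by
  constructor
  simp only [threePoint_apply, Set.indicator_univ, Pi.one_apply, mul_one]
  rw [← ENNReal.ofReal_add hp hq, ← ENNReal.ofReal_add (add_nonneg hp hq) hr, h,
    ENNReal.ofReal_one]

theorem threePoint_compl_eq_zero : threePoint p q r a b c ({a, b, c}ᶜ) = 0 := by
  simp [threePoint_apply]

theorem integral_threePoint (hp : 0 ≤ p) (hq : 0 ≤ q) (hr : 0 ≤ r) (f : ℝ → ℝ) :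
    ∫ y, f y ∂threePoint p q r a b c = p * f a + q * f b + r * f c := by
  have hint : ∀ (w z : ℝ), Integrable f (ENNReal.ofReal w • Measure.dirac z) := fun w z =>
    ((integrable_const (f z)).congr (ae_eq_dirac f).symm).smul_measure ENNReal.ofReal_ne_top
  rw [threePoint, integral_add_measure ((hint p a).add_measure (hint q b)) (hint r c),
    integral_add_measure (hint p a) (hint q b), integral_smul_measure, integral_smul_measure,
    integral_smul_measure, integral_dirac, integral_dirac, integral_dirac,
    ENNReal.toReal_ofReal hp, ENNReal.toReal_ofReal hq, ENNReal.toReal_ofReal hr, smul_eq_mul,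
    smul_eq_mul, smul_eq_mul]

end threePoint

theorem exists_centered_unitVariance_fourthMoment_lt {p q r s T : ℝ} (hp : 0 ≤ p) (hq : 0 ≤ q)
    (hr : 0 < r) (hs : 0 < s) (hT : 0 < T) (hmean : p * s = r * T) {ε : ℝ} (hε : 0 < ε) :
    ∃ x₁ x₂ x₃ : ℝ, x₁ < x₂ ∧ x₂ < 0 ∧ 0 < x₃ ∧
      p * x₁ + q * x₂ + r * x₃ = 0 ∧ p * x₁ ^ 2 + q * x₂ ^ 2 + r * x₃ ^ 2 = 1 ∧
      p * x₁ ^ 4 + q * x₂ ^ 4 + r * x₃ ^ 4 <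
        (p * s ^ 4 + r * T ^ 4) / (p * s ^ 2 + r * T ^ 2) ^ 2 + ε := by
  set u : ℝ → ℝ := fun t => T + q * t / r
  set S : ℕ → ℝ → ℝ := fun n t => p * s ^ n + q * t ^ n + r * u t ^ n
  have hS2 : ∀ t, 0 ≤ t → 0 < S 2 t := fun t ht => by
    have : 0 < u t := by positivity
    positivity
  have hF : ContinuousAt (fun t => S 4 t / S 2 t ^ 2) 0 :=
    ContinuousAt.div (by fun_prop) (by fun_prop) (pow_ne_zero 2 (hS2 0 le_rfl).ne')
  have hF0 : S 4 0 / S 2 0 ^ 2 = (p * s ^ 4 + r * T ^ 4) / (p * s ^ 2 + r * T ^ 2) ^ 2 := by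
    simp [S, u]
  obtain ⟨t, hFt, hts, ht⟩ :
      ∃ t, S 4 t / S 2 t ^ 2 < S 4 0 / S 2 0 ^ 2 + ε ∧ t < s ∧ 0 < t := by
    refine Eventually.exists (f := 𝓝[>] 0) ?_
    filter_upwards [nhdsWithin_le_nhds (hF (gt_mem_nhds (lt_add_of_pos_right _ hε))),
      nhdsWithin_le_nhds (gt_mem_nhds hs), self_mem_nhdsWithin]
      with t hlt hts ht using ⟨hlt, hts, ht⟩
  set w := √(S 2 t)
  have hw : 0 < w := sqrt_pos.2 (hS2 t ht.le)
  have hw2 : w ^ 2 = S 2 t := sq_sqrt (hS2 t ht.le).le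
  have hu : 0 < u t := by positivity
  refine ⟨-s / w, -t / w, u t / w, by gcongr, div_neg_of_neg_of_pos (neg_neg_of_pos ht) hw,
    div_pos hu hw, ?_, ?_, ?_⟩
  · have hru : r * u t = r * T + q * t := by simp only [u]; field_simp
    field_simp
    linear_combination hru - hmean
  · field_simp
    exact hw2.symm
  · rw [← hF0]
    convert hFt using 1
    field_simp
    rw [show w ^ 4 = (w ^ 2) ^ 2 by ring, hw2,
      mul_div_cancel_left₀ _ (pow_ne_zero 2 (hS2 t ht.le).ne')]

theorem extremal_fourthMoment_ratio {x : ℝ} (hx : x ≠ 0) :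
    ((3 / 2 - √3 / 2) / x * (√3 - 1) ^ 4 + (2 * √3 - 3) / x * 1 ^ 4) /
      ((3 / 2 - √3 / 2) / x * (√3 - 1) ^ 2 + (2 * √3 - 3) / x * 1 ^ 2) ^ 2 = x := by
  have h3 : √3 ^ 2 = 3 := sq_sqrt (by norm_num)
  have hb : 2 * √3 - 3 ≠ 0 := by nlinarith [sqrt_nonneg 3]
  have hm2 : (3 / 2 - √3 / 2) / x * (√3 - 1) ^ 2 + (2 * √3 - 3) / x * 1 ^ 2 =
      √3 * (2 * √3 - 3) / x := by
    linear_combination (1 - √3) / (2 * x) * h3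
  have hm4 : (3 / 2 - √3 / 2) / x * (√3 - 1) ^ 4 + (2 * √3 - 3) / x * 1 ^ 4 =
      3 * (2 * √3 - 3) ^ 2 / x := by
    linear_combination (19 - 21 * √3 + 7 * √3 ^ 2 - √3 ^ 3) / (2 * x) * h3
  rw [hm2, hm4, div_pow, mul_pow, h3]
  field_simp

theorem stmt7 (x : ℝ) (hx : 3 * Real.sqrt 3 / 2 - 3 / 2 ≤ x) (ε' : ℝ) (hε : 0 < ε') :
    ∃ (μ : Measure ℝ) (_ : IsProbabilityMeasure μ) (x₁ x₂ x₃ : ℝ),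
      x₁ < x₂ ∧ x₂ < 0 ∧ 0 < x₃ ∧
      μ (({x₁, x₂, x₃} : Set ℝ)ᶜ) = 0 ∧
      (∫ y, y ∂μ) = 0 ∧ (∫ y, y ^ 2 ∂μ) = 1 ∧ (∫ y, y ^ 4 ∂μ) ≤ x + ε' ∧
      μ {y | 0 ≤ y} = ENNReal.ofReal ((2 * Real.sqrt 3 - 3) / x) := by
  have h3 : √3 ^ 2 = 3 := sq_sqrt (by norm_num)
  have h3lo : 3 / 2 < √3 := by nlinarith [sqrt_nonneg 3]
  have h3hi : √3 < 2 := by nlinarith [sqrt_nonneg 3]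
  have hx0 : 0 < x := by linarith
  set p := (3 / 2 - √3 / 2) / x
  set q := 1 - (3 * √3 / 2 - 3 / 2) / x
  set r := (2 * √3 - 3) / x
  have hp : 0 ≤ p := div_nonneg (by linarith) hx0.le
  have hq : 0 ≤ q := sub_nonneg.2 ((div_le_one hx0).2 hx)
  have hr : 0 < r := div_pos (by linarith) hx0
  have hsum : p + q + r = 1 := by field_simp; ring
  have hbase : p * (√3 - 1) = r * 1 := by linear_combination (-1 / (2 * x)) * h3
  obtain ⟨x₁, x₂, x₃, h₁₂, h₂, h₃, hmean, hvar, hfourth⟩ :=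
    exists_centered_unitVariance_fourthMoment_lt hp hq hr (by linarith) one_pos hbase hε
  rw [extremal_fourthMoment_ratio hx0.ne'] at hfourth
  refine ⟨threePoint p q r x₁ x₂ x₃, isProbabilityMeasure_threePoint hp hq hr.le hsum,
    x₁, x₂, x₃, h₁₂, h₂, h₃, threePoint_compl_eq_zero, ?_, ?_, ?_, ?_⟩
  · simpa only [integral_threePoint hp hq hr.le] using hmean
  · simpa only [integral_threePoint hp hq hr.le] using hvar
  · simpa only [integral_threePoint hp hq hr.le] using hfourth.le
  · simp [threePoint_apply, h₂.not_ge, (h₁₂.trans h₂).not_ge, h₃.le]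
end

section
/- For every x ∈ [1, (3√3)/2 − 3/2) there exists a centered two-valued random variable ξ with Eξ² = 1, Eξ⁴ = x, and P(ξ ≤ 0) = 1/2 − (1/2)√((x−1)/(x+3)). -/
open MeasureTheory ProbabilityTheory Real unitInterval

/-!
A standardized Bernoulli variable, with mass `p` on its negative atom, has mean `0`, variance `1`
and fourth moment `1 / (p (1 - p)) - 3`. For `p = (1 - √((x - 1) / (x + 3))) / 2` one has
`p (1 - p) = 1 / (x + 3)`, so the fourth moment is `x`, and `P(ξ ≤ 0) = p`.
-/

/-- The law of `(B - (1 - p)) / √(p (1 - p))`, where `B` is `0` with probability `p` and `1`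
otherwise. -/
noncomputable def standardizedBernoulli (p : I) : Measure ℝ :=
  bernoulliMeasure (-(1 - p) / √(p * (1 - p))) (p / √(p * (1 - p))) p

section standardizedBernoulli

variable {p : I}

instance : IsProbabilityMeasure (standardizedBernoulli p) := by
  unfold standardizedBernoulli; infer_instance

lemma integral_standardizedBernoulli (f : ℝ → ℝ) :
    ∫ y, f y ∂standardizedBernoulli p =
      p * f (-(1 - p) / √(p * (1 - p))) + (1 - p) * f (p / √(p * (1 - p))) :=
  integral_bernoulliMeasure _ _ p f

lemma standardizedBernoulli_compl_pair :
    standardizedBernoulli p {-(1 - p) / √(p * (1 - p)), p / √(p * (1 - p))}ᶜ = 0 :=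
  bernoulliMeasure_apply_of_notMem_of_notMem p (Set.toFinite _).measurableSet.compl
    (by simp) (by simp)

lemma integral_id_standardizedBernoulli : ∫ y, y ∂standardizedBernoulli p = 0 := by
  rw [integral_standardizedBernoulli]; ring

lemma integral_sq_standardizedBernoulli (h₀ : 0 < (p : ℝ)) (h₁ : (p : ℝ) < 1) :
    ∫ y, y ^ 2 ∂standardizedBernoulli p = 1 := by
  have hv : 0 < (p : ℝ) * (1 - p) := by nlinarith
  have hq : 1 - (p : ℝ) ≠ 0 := by linarith
  rw [integral_standardizedBernoulli, div_pow, div_pow, neg_sq, sq_sqrt hv.le]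
  field_simp [h₀.ne']
  ring

lemma integral_pow_four_standardizedBernoulli (h₀ : 0 < (p : ℝ)) (h₁ : (p : ℝ) < 1) :
    ∫ y, y ^ 4 ∂standardizedBernoulli p = ((p : ℝ) * (1 - p))⁻¹ - 3 := by
  have hv : 0 < (p : ℝ) * (1 - p) := by nlinarith
  have hq : 1 - (p : ℝ) ≠ 0 := by linarith
  have hσ : √((p : ℝ) * (1 - p)) ^ 4 = ((p : ℝ) * (1 - p)) ^ 2 := by
    rw [show 4 = 2 * 2 from rfl, pow_mul, sq_sqrt hv.le]
  rw [integral_standardizedBernoulli, div_pow, div_pow, neg_pow, hσ]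
  field_simp [h₀.ne']
  ring

lemma standardizedBernoulli_Iic_zero (h₀ : 0 < (p : ℝ)) (h₁ : (p : ℝ) < 1) :
    standardizedBernoulli p (Set.Iic 0) = ENNReal.ofReal p := by
  have hσ : 0 < √((p : ℝ) * (1 - p)) := sqrt_pos.2 (by nlinarith)
  rw [standardizedBernoulli, bernoulliMeasure_apply_of_mem_of_notMem p measurableSet_Iic]
  · exact (ENNReal.ofReal_coe_nnreal (p := unitInterval.toNNReal p)).symm
  · exact Set.mem_Iic.2 (div_nonpos_of_nonpos_of_nonneg (by linarith [p.2.2]) hσ.le)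
  · exact Set.notMem_Iic.2 (by positivity)

lemma standardizedBernoulli_points_ne (h₀ : 0 < (p : ℝ)) (h₁ : (p : ℝ) < 1) :
    -(1 - p) / √(p * (1 - p)) ≠ p / √(p * (1 - p)) := by
  have hσ : 0 < √((p : ℝ) * (1 - p)) := sqrt_pos.2 (by nlinarith)
  rw [Ne, div_left_inj' hσ.ne']
  linarith

end standardizedBernoulli

theorem stmt8_general (x : ℝ) (hx1 : 1 ≤ x) :
    ∃ (μ : Measure ℝ) (_ : IsProbabilityMeasure μ) (x₁ x₂ : ℝ), x₁ ≠ x₂ ∧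
      μ (({x₁, x₂} : Set ℝ)ᶜ) = 0 ∧
      (∫ y, y ∂μ) = 0 ∧ (∫ y, y ^ 2 ∂μ) = 1 ∧ (∫ y, y ^ 4 ∂μ) = x ∧
      μ {y | y ≤ 0} = ENNReal.ofReal (1 / 2 - Real.sqrt ((x - 1) / (x + 3)) / 2) := by
  set u := √((x - 1) / (x + 3))
  have hu₀ : 0 ≤ u := sqrt_nonneg _
  have hu_sq : u ^ 2 = (x - 1) / (x + 3) := sq_sqrt (div_nonneg (by linarith) (by linarith))
  have hu₁ : u < 1 := by
    refine (sq_lt_one_iff₀ hu₀).1 ?_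
    rw [hu_sq, div_lt_one (by linarith)]
    linarith
  let p : I := ⟨1 / 2 - u / 2, by linarith, by linarith⟩
  have h₀ : 0 < (p : ℝ) := by simp only [p]; linarith
  have h₁ : (p : ℝ) < 1 := by simp only [p]; linarith
  have hvar : (p : ℝ) * (1 - p) = (x + 3)⁻¹ := by
    have hxu : (x + 3) * u ^ 2 = x - 1 := by rw [hu_sq]; field_simp
    field_simp
    linear_combination (-1 / 4) * hxu
  refine ⟨standardizedBernoulli p, inferInstance, _, _, standardizedBernoulli_points_ne h₀ h₁,
    standardizedBernoulli_compl_pair, integral_id_standardizedBernoulli,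
    integral_sq_standardizedBernoulli h₀ h₁, ?_, standardizedBernoulli_Iic_zero h₀ h₁⟩
  rw [integral_pow_four_standardizedBernoulli h₀ h₁, hvar, inv_inv]
  ring

theorem stmt8 (x : ℝ) (hx1 : 1 ≤ x) (hx2 : x < 3 * Real.sqrt 3 / 2 - 3 / 2) :
    ∃ (μ : Measure ℝ) (_ : IsProbabilityMeasure μ) (x₁ x₂ : ℝ), x₁ ≠ x₂ ∧
      μ (({x₁, x₂} : Set ℝ)ᶜ) = 0 ∧
      (∫ y, y ∂μ) = 0 ∧ (∫ y, y ^ 2 ∂μ) = 1 ∧ (∫ y, y ^ 4 ∂μ) = x ∧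
      μ {y | y ≤ 0} = ENNReal.ofReal (1 / 2 - Real.sqrt ((x - 1) / (x + 3)) / 2) :=
  stmt8_general x hx1
end

section
/- Let γ₁,…,γₙ be independent standard Gaussians and A = (a_{ij}) a symmetric real n×n matrix with zero diagonal. Then E(Σ_{1≤i<j≤n} γᵢγⱼ a_{ij})⁴ ≤ 15 · (E(Σ_{1≤i<j≤n} γᵢγⱼ a_{ij})²)², i.e. the L⁴ norm of the Gaussian chaos is at most 15^{1/4} times its L² norm. -/
/-!
Write `Q(x) = ∑ i j, a_ij x_i x_j`, so the chaos is `Q(γ) / 2`. On polynomials, the expectation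
`𝔼 P = E[P(γ)]` is a linear functional obeying Stein's identity `𝔼 (X i * P) = 𝔼 (∂ᵢ P)`, which
reduces to the moment recursion `m (k + 2) = (k + 1) * m k` of the standard Gaussian. Since
`∂ᵢ Q = 2 (A x)ᵢ`, integrating by parts over and over gives `𝔼 Q² = 2 tr A²` and
`𝔼 Q⁴ = 12 (tr A²)² + 48 tr A⁴`. By Cauchy–Schwarz, `tr A⁴ = ∑ (A²)ᵢₖ² ≤ ∑ (A²)ᵢᵢ (A²)ₖₖ = (tr A²)²`,
hence `𝔼 Q⁴ ≤ 60 (tr A²)² = 15 (𝔼 Q²)²`.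
-/

open MeasureTheory ProbabilityTheory Real MvPolynomial

lemma integrable_pow_gaussianReal {μ : ℝ} {v : NNReal} (k : ℕ) :
    Integrable (fun x : ℝ ↦ x ^ k) (gaussianReal μ v) :=
  (memLp_id_gaussianReal k).integrable_norm_pow'.mono' (by fun_prop) (ae_of_all _ fun x ↦ by simp)

lemma gaussianPDFReal_zero_one :
    gaussianPDFReal 0 1 = fun x ↦ (√(2 * π))⁻¹ * rexp (-x ^ 2 / 2) := by
  ext x; simp [gaussianPDFReal]

lemma hasDerivAt_gaussianPDFReal_zero_one (x : ℝ) :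
    HasDerivAt (gaussianPDFReal 0 1) (-x * gaussianPDFReal 0 1 x) x := by
  rw [gaussianPDFReal_zero_one]
  have h : HasDerivAt (fun y : ℝ ↦ -y ^ 2 / 2) (-x) x := by
    simpa using ((hasDerivAt_pow 2 x).neg.div_const 2).congr_deriv (by ring)
  exact (h.exp.const_mul _).congr_deriv (by ring)

lemma integrable_gaussianPDFReal_mul_pow (k : ℕ) :
    Integrable (fun x : ℝ ↦ gaussianPDFReal 0 1 x * x ^ k) := by
  have h := integrable_rpow_mul_exp_neg_mul_sq (b := 1 / 2) (by norm_num) (s := k)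
    (by linarith [(Nat.cast_nonneg k : (0 : ℝ) ≤ k)])
  convert h.const_mul (√(2 * π))⁻¹ using 2 with x
  rw [gaussianPDFReal_zero_one, Real.rpow_natCast]; ring_nf

noncomputable def stdGaussianMoment (k : ℕ) : ℝ := ∫ x, x ^ k ∂gaussianReal 0 1

lemma stdGaussianMoment_eq_integral (k : ℕ) :
    stdGaussianMoment k = ∫ x, gaussianPDFReal 0 1 x * x ^ k := by
  simp only [stdGaussianMoment, integral_gaussianReal_eq_integral_smul one_ne_zero, smul_eq_mul]

lemma stdGaussianMoment_zero : stdGaussianMoment 0 = 1 := by simp [stdGaussianMoment]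

lemma stdGaussianMoment_one : stdGaussianMoment 1 = 0 := by simp [stdGaussianMoment]

lemma stdGaussianMoment_add_two (k : ℕ) :
    stdGaussianMoment (k + 2) = (k + 1) * stdGaussianMoment k := by
  set φ := gaussianPDFReal 0 1
  have hderiv (x : ℝ) : HasDerivAt (fun y ↦ φ y * y ^ (k + 1))
      ((k + 1) * (φ x * x ^ k) - φ x * x ^ (k + 2)) x :=
    ((hasDerivAt_gaussianPDFReal_zero_one x).mul (hasDerivAt_pow (k + 1) x)).congr_deriv
      (by push_cast; ring)
  have hint := integrable_gaussianPDFReal_mul_pow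
  have h := integral_eq_zero_of_hasDerivAt_of_integrable hderiv
    (((hint k).const_mul _).sub (hint (k + 2))) (hint (k + 1))
  rw [integral_sub ((hint k).const_mul _) (hint (k + 2)), integral_const_mul] at h
  rw [stdGaussianMoment_eq_integral, stdGaussianMoment_eq_integral]
  linarith

lemma stdGaussianMoment_succ (k : ℕ) :
    stdGaussianMoment (k + 1) = k * stdGaussianMoment (k - 1) := by
  cases k with
  | zero => simp [stdGaussianMoment_one]
  | succ k => simpa using stdGaussianMoment_add_two k

lemma ProbabilityTheory.iIndepFun.integrable_finsetProd {Ω ι : Type*} [MeasurableSpace Ω]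
    {μ : Measure Ω} {X : ι → Ω → ℝ} (hX : iIndepFun X μ) (hmeas : ∀ i, Measurable (X i))
    (hint : ∀ i, Integrable (X i) μ) (s : Finset ι) :
    Integrable (∏ i ∈ s, X i) μ := by
  classical
  induction s using Finset.induction_on with
  | empty => have := hX.isProbabilityMeasure; exact integrable_const (1 : ℝ)
  | insert i s hi ih =>
    rw [Finset.prod_insert hi, mul_comm]
    exact (hX.indepFun_finsetProd_of_notMem hmeas hi).integrable_mul ih (hint i)

lemma MvPolynomial.eval_monomial_eq_prod {ι R : Type*} [Fintype ι] [CommSemiring R]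
    (x : ι → R) (d : ι →₀ ℕ) (c : R) : eval x (monomial d c) = c * ∏ i, x i ^ d i := by
  rw [eval_monomial, Finsupp.prod_pow]

section GaussianPolyExpectation

variable (ι : Type*) [Fintype ι]

noncomputable def gaussianPolyExpectation : MvPolynomial ι ℝ →ₗ[ℝ] ℝ :=
  (basisMonomials ι ℝ).constr ℝ fun d ↦ ∏ i, stdGaussianMoment (d i)

variable {ι}

lemma gaussianPolyExpectation_monomial (d : ι →₀ ℕ) (c : ℝ) :
    gaussianPolyExpectation ι (monomial d c) = c * ∏ i, stdGaussianMoment (d i) := by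
  rw [show monomial d c = c • basisMonomials ι ℝ d by
      rw [coe_basisMonomials, smul_monomial, smul_eq_mul, mul_one],
    map_smul, gaussianPolyExpectation, Module.Basis.constr_basis, smul_eq_mul]

lemma gaussianPolyExpectation_C (c : ℝ) : gaussianPolyExpectation ι (C c) = c := by
  simp [← monomial_zero', gaussianPolyExpectation_monomial, stdGaussianMoment_zero]

lemma gaussianPolyExpectation_C_mul (a : ℝ) (P : MvPolynomial ι ℝ) :
    gaussianPolyExpectation ι (C a * P) = a * gaussianPolyExpectation ι P := by
  rw [C_mul', map_smul, smul_eq_mul]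

lemma gaussianPolyExpectation_ofNat_mul (n : ℕ) [n.AtLeastTwo] (P : MvPolynomial ι ℝ) :
    gaussianPolyExpectation ι (ofNat(n) * P) = ofNat(n) * gaussianPolyExpectation ι P := by
  rw [← map_ofNat C, gaussianPolyExpectation_C_mul]

lemma gaussianPolyExpectation_X_mul (i : ι) (P : MvPolynomial ι ℝ) :
    gaussianPolyExpectation ι (X i * P) = gaussianPolyExpectation ι (pderiv i P) := by
  classical
  induction P using MvPolynomial.induction_on' with
  | add P Q hP hQ => rw [mul_add, map_add, map_add, map_add, hP, hQ]
  | monomial d c =>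
    rw [X, monomial_mul, one_mul, pderiv_monomial, gaussianPolyExpectation_monomial,
      gaussianPolyExpectation_monomial, ← Finset.mul_prod_erase _ _ (Finset.mem_univ i),
      ← Finset.mul_prod_erase _ _ (Finset.mem_univ i)]
    have herase : ∀ j ∈ Finset.univ.erase i, stdGaussianMoment (Finsupp.single i 1 j + d j) =
        stdGaussianMoment (d j - Finsupp.single i 1 j) := fun j hj ↦ by
      simp [Finsupp.single_eq_of_ne (Finset.ne_of_mem_erase hj)]
    simp only [Finsupp.add_apply, Finsupp.tsub_apply, Finset.prod_congr rfl herase,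
      Finsupp.single_eq_same, add_comm 1, stdGaussianMoment_succ]
    ring

variable {Ω : Type*} [MeasurableSpace Ω] {μ : Measure Ω} {γ : ι → Ω → ℝ}

lemma integrable_eval_of_iIndepFun (hmeas : ∀ i, Measurable (γ i)) (hindep : iIndepFun γ μ)
    (hgauss : ∀ i, μ.map (γ i) = gaussianReal 0 1) (P : MvPolynomial ι ℝ) :
    Integrable (fun ω ↦ eval (γ · ω) P) μ := by
  induction P using MvPolynomial.induction_on' with
  | add P Q hP hQ => simp only [map_add]; exact hP.add hQ
  | monomial d c =>
    have hpow (i : ι) : Integrable (fun ω ↦ γ i ω ^ d i) μ := by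
      have h := integrable_pow_gaussianReal (μ := 0) (v := 1) (d i)
      rwa [← hgauss i, integrable_map_measure (by fun_prop) (hmeas i).aemeasurable] at h
    have hprod : Integrable (fun ω ↦ ∏ i, γ i ω ^ d i) μ := by
      simpa [Finset.prod_fn] using
        (hindep.comp _ fun i ↦ measurable_id.pow_const (d i)).integrable_finsetProd
          (fun i ↦ (hmeas i).pow_const (d i)) hpow Finset.univ
    simpa only [eval_monomial_eq_prod] using hprod.const_mul c

lemma integral_eval_eq_gaussianPolyExpectation (hmeas : ∀ i, Measurable (γ i))
    (hindep : iIndepFun γ μ) (hgauss : ∀ i, μ.map (γ i) = gaussianReal 0 1)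
    (P : MvPolynomial ι ℝ) : ∫ ω, eval (γ · ω) P ∂μ = gaussianPolyExpectation ι P := by
  induction P using MvPolynomial.induction_on' with
  | add P Q hP hQ =>
    simp only [map_add]
    rw [integral_add (integrable_eval_of_iIndepFun hmeas hindep hgauss P)
      (integrable_eval_of_iIndepFun hmeas hindep hgauss Q), hP, hQ]
  | monomial d c =>
    simp_rw [eval_monomial_eq_prod, integral_const_mul, gaussianPolyExpectation_monomial]
    rw [hindep.integral_fun_prod_comp (f := fun i x ↦ x ^ d i) (fun i ↦ (hmeas i).aemeasurable)
      (fun i ↦ by fun_prop)]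
    congr 1
    refine Finset.prod_congr rfl fun i _ ↦ ?_
    rw [stdGaussianMoment, ← hgauss i, integral_map (hmeas i).aemeasurable (by fun_prop)]

end GaussianPolyExpectation

lemma Matrix.IsSymm.sum_mul_apply {ι α : Type*} [Fintype ι] [NonUnitalNonAssocSemiring α]
    {B : Matrix ι ι α} (hB : B.IsSymm) (A : Matrix ι ι α) (i k : ι) :
    ∑ j, A i j * B k j = (A * B) i k := by
  simp [Matrix.mul_apply, hB.apply]

section QuadraticChaos

variable {ι : Type*} [Fintype ι]

noncomputable def linForm (A : Matrix ι ι ℝ) (i : ι) : MvPolynomial ι ℝ := ∑ j, C (A i j) * X j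

noncomputable def quadForm (A : Matrix ι ι ℝ) : MvPolynomial ι ℝ := ∑ i, X i * linForm A i

variable {A : Matrix ι ι ℝ}

lemma eval_quadForm (x : ι → ℝ) : eval x (quadForm A) = ∑ i, ∑ j, x i * x j * A i j := by
  simp only [quadForm, linForm, map_sum, map_mul, eval_X, eval_C, Finset.mul_sum]
  exact Finset.sum_congr rfl fun i _ ↦ Finset.sum_congr rfl fun j _ ↦ by ring

lemma pderiv_linForm (i k : ι) : pderiv k (linForm A i) = C (A i k) := by
  classical
  simp [linForm, Pi.single_apply]

lemma pderiv_quadForm (hA : A.IsSymm) (k : ι) : pderiv k (quadForm A) = 2 * linForm A k := by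
  classical
  have hsum : ∑ i, X i * C (A i k) = linForm A k := by
    simp only [linForm, hA.apply k, mul_comm]
  simp only [quadForm, map_sum, Derivation.leibniz, pderiv_linForm, pderiv_X, smul_eq_mul,
    Finset.sum_add_distrib, Pi.single_apply, mul_ite, mul_one, mul_zero, Finset.sum_ite_eq',
    Finset.mem_univ, if_true, hsum]
  ring

local notation "𝔼" => gaussianPolyExpectation ι

lemma gaussianPolyExpectation_linForm_mul (i : ι) (P : MvPolynomial ι ℝ) :
    𝔼 (linForm A i * P) = ∑ j, A i j * 𝔼 (pderiv j P) := by
  simp only [linForm, Finset.sum_mul, map_sum, mul_assoc, gaussianPolyExpectation_C_mul,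
    gaussianPolyExpectation_X_mul]

lemma gaussianPolyExpectation_quadForm_mul (hdiag : ∀ i, A i i = 0) (P : MvPolynomial ι ℝ) :
    𝔼 (quadForm A * P) = ∑ i, 𝔼 (linForm A i * pderiv i P) := by
  simp only [quadForm, Finset.sum_mul, map_sum, mul_assoc, gaussianPolyExpectation_X_mul,
    Derivation.leibniz, pderiv_linForm, hdiag, map_zero, smul_eq_mul, mul_zero, add_zero]

lemma gaussianPolyExpectation_quadForm (hdiag : ∀ i, A i i = 0) : 𝔼 (quadForm A) = 0 := by
  simpa [pderiv_one] using gaussianPolyExpectation_quadForm_mul hdiag 1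

variable [DecidableEq ι]

lemma gaussianPolyExpectation_linForm_mul_linForm (hA : A.IsSymm) (i k : ι) :
    𝔼 (linForm A i * linForm A k) = (A ^ 2) i k := by
  simp only [gaussianPolyExpectation_linForm_mul, pderiv_linForm, gaussianPolyExpectation_C,
    hA.sum_mul_apply, sq]

lemma gaussianPolyExpectation_quadForm_sq (hA : A.IsSymm) (hdiag : ∀ i, A i i = 0) :
    𝔼 (quadForm A ^ 2) = 2 * (A ^ 2).trace := by
  rw [sq, gaussianPolyExpectation_quadForm_mul hdiag, Matrix.trace, Finset.mul_sum]
  refine Finset.sum_congr rfl fun i _ ↦ ?_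
  rw [pderiv_quadForm hA, mul_left_comm, gaussianPolyExpectation_ofNat_mul,
    gaussianPolyExpectation_linForm_mul_linForm hA, Matrix.diag]

lemma gaussianPolyExpectation_linForm_mul_linForm_mul_quadForm (hA : A.IsSymm)
    (hdiag : ∀ i, A i i = 0) (i k : ι) :
    𝔼 (linForm A i * linForm A k * quadForm A) = 2 * (A ^ 3) i k := by
  have hpderiv (j : ι) : pderiv j (linForm A k * quadForm A)
      = C (A k j) * quadForm A + 2 * (linForm A k * linForm A j) := by
    rw [Derivation.leibniz, pderiv_quadForm hA, pderiv_linForm, smul_eq_mul, smul_eq_mul]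
    ring
  simp only [mul_assoc, gaussianPolyExpectation_linForm_mul, hpderiv, map_add,
    gaussianPolyExpectation_C_mul, gaussianPolyExpectation_ofNat_mul,
    gaussianPolyExpectation_quadForm hdiag, gaussianPolyExpectation_linForm_mul_linForm hA,
    mul_zero, zero_add, mul_left_comm _ (2 : ℝ), ← Finset.mul_sum, (hA.pow 2).sum_mul_apply,
    ← pow_succ']

lemma gaussianPolyExpectation_linForm_mul_linForm_mul_quadForm_sq (hA : A.IsSymm)
    (hdiag : ∀ i, A i i = 0) (i k : ι) :
    𝔼 (linForm A i * linForm A k * quadForm A ^ 2) =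
      (A ^ 2) i k * 𝔼 (quadForm A ^ 2) + 8 * (A ^ 4) i k := by
  have hpderiv (j : ι) : pderiv j (linForm A k * quadForm A ^ 2)
      = C (A k j) * quadForm A ^ 2 + 4 * (linForm A k * linForm A j * quadForm A) := by
    rw [Derivation.leibniz, Derivation.leibniz_pow, pderiv_quadForm hA, pderiv_linForm]
    simp only [smul_eq_mul, nsmul_eq_mul]
    ring
  simp only [mul_assoc _ _ (quadForm A ^ 2), gaussianPolyExpectation_linForm_mul, hpderiv, map_add,
    gaussianPolyExpectation_C_mul, gaussianPolyExpectation_ofNat_mul,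
    gaussianPolyExpectation_linForm_mul_linForm_mul_quadForm hA hdiag]
  calc ∑ j, A i j * (A k j * 𝔼 (quadForm A ^ 2) + 4 * (2 * (A ^ 3) k j))
      = (∑ j, A i j * A k j) * 𝔼 (quadForm A ^ 2) + 8 * ∑ j, A i j * (A ^ 3) k j := by
        rw [Finset.sum_mul, Finset.mul_sum, ← Finset.sum_add_distrib]
        exact Finset.sum_congr rfl fun j _ ↦ by ring
    _ = _ := by rw [hA.sum_mul_apply, (hA.pow 3).sum_mul_apply, ← sq, ← pow_succ']

lemma gaussianPolyExpectation_quadForm_pow_four (hA : A.IsSymm) (hdiag : ∀ i, A i i = 0) :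
    𝔼 (quadForm A ^ 4) = 12 * (A ^ 2).trace ^ 2 + 48 * (A ^ 4).trace := by
  have hpderiv (j : ι) : pderiv j (quadForm A ^ 3) = 6 * (linForm A j * quadForm A ^ 2) := by
    rw [Derivation.leibniz_pow, pderiv_quadForm hA]
    simp only [smul_eq_mul, nsmul_eq_mul]
    ring
  rw [pow_succ', gaussianPolyExpectation_quadForm_mul hdiag, Matrix.trace, Matrix.trace,
    sq (Finset.sum _ _), Finset.sum_mul, Finset.mul_sum, Finset.mul_sum, ← Finset.sum_add_distrib]
  refine Finset.sum_congr rfl fun i _ ↦ ?_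
  rw [hpderiv, mul_left_comm, gaussianPolyExpectation_ofNat_mul, ← mul_assoc,
    gaussianPolyExpectation_linForm_mul_linForm_mul_quadForm_sq hA hdiag,
    gaussianPolyExpectation_quadForm_sq hA hdiag, Matrix.diag, Matrix.diag, Matrix.trace]
  ring

end QuadraticChaos

namespace Matrix.IsSymm

variable {ι : Type*} [Fintype ι] [DecidableEq ι] {A : Matrix ι ι ℝ}

lemma pow_two_apply_sq_le (hA : A.IsSymm) (i k : ι) :
    (A ^ 2) i k ^ 2 ≤ (A ^ 2) i i * (A ^ 2) k k := by
  have hsq (i k : ι) : (A ^ 2) i k = ∑ j, A i j * A k j := by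
    rw [sq, mul_apply]; simp only [hA.apply k]
  simpa only [hsq, sq] using Finset.sum_mul_sq_le_sq_mul_sq Finset.univ (A i) (A k)

lemma trace_pow_four_le (hA : A.IsSymm) : (A ^ 4).trace ≤ (A ^ 2).trace ^ 2 :=
  calc (A ^ 4).trace = ∑ i, ∑ k, (A ^ 2) i k ^ 2 := by
        rw [show A ^ 4 = A ^ 2 * A ^ 2 by rw [← pow_add], trace]
        refine Finset.sum_congr rfl fun i _ ↦ Finset.sum_congr rfl fun k _ ↦ ?_
        simp only [(hA.pow 2).apply i k, sq ((A ^ 2) i k)]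
    _ ≤ ∑ i, ∑ k, (A ^ 2) i i * (A ^ 2) k k :=
        Finset.sum_le_sum fun i _ ↦ Finset.sum_le_sum fun k _ ↦ hA.pow_two_apply_sq_le i k
    _ = (A ^ 2).trace ^ 2 := by rw [sq (trace _), trace, Finset.sum_mul_sum]; rfl

end Matrix.IsSymm

lemma Finset.sum_sum_eq_two_mul_sum_sum_ite_lt {ι : Type*} [Fintype ι] [LinearOrder ι]
    (f : ι → ι → ℝ) (hsymm : ∀ i j, f i j = f j i) (hdiag : ∀ i, f i i = 0) :
    ∑ i, ∑ j, f i j = 2 * ∑ i, ∑ j, if i < j then f i j else 0 := by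
  have hsplit (i j : ι) : f i j = (if i < j then f i j else 0) + (if j < i then f j i else 0) := by
    rcases lt_trichotomy i j with h | rfl | h
    · simp [h, h.not_gt]
    · simp [hdiag]
    · simp [h, h.not_gt, hsymm i j]
  calc ∑ i, ∑ j, f i j
      = ∑ i, ∑ j, (if i < j then f i j else 0) + ∑ i, ∑ j, (if j < i then f j i else 0) := by
        simp only [← Finset.sum_add_distrib, ← hsplit]
    _ = 2 * ∑ i, ∑ j, if i < j then f i j else 0 := by
        rw [Finset.sum_comm (f := fun i j ↦ if j < i then f j i else 0), two_mul]

theorem stmt12_general {Ω : Type*} [MeasureSpace Ω]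
    {n : ℕ} (γ : Fin n → Ω → ℝ) (hmeas : ∀ i, Measurable (γ i))
    (hindep : iIndepFun γ ℙ)
    (hgauss : ∀ i, Measure.map (γ i) ℙ = gaussianReal 0 1)
    (A : Fin n → Fin n → ℝ) (hsymm : ∀ i j, A i j = A j i) (hdiag : ∀ i, A i i = 0) :
    (∫ ω, (∑ i, ∑ j, if i < j then γ i ω * γ j ω * A i j else 0) ^ 4) ≤
      15 * (∫ ω, (∑ i, ∑ j, if i < j then γ i ω * γ j ω * A i j else 0) ^ 2) ^ 2 := by
  have hA : (Matrix.of A).IsSymm := Matrix.IsSymm.ext fun i j ↦ hsymm j i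
  have hdiag' : ∀ i, Matrix.of A i i = 0 := hdiag
  have hchaos (ω : Ω) : (∑ i, ∑ j, if i < j then γ i ω * γ j ω * A i j else 0) =
      eval (γ · ω) (quadForm (Matrix.of A)) / 2 := by
    rw [eval_quadForm, Finset.sum_sum_eq_two_mul_sum_sum_ite_lt
      (fun i j ↦ γ i ω * γ j ω * Matrix.of A i j)
      (fun i j ↦ by rw [Matrix.of_apply, Matrix.of_apply, hsymm]; ring)
      (fun i ↦ by rw [hdiag', mul_zero])]
    simp only [Matrix.of_apply]
    ring
  have hmoment (m : ℕ) : ∫ ω, (∑ i, ∑ j, if i < j then γ i ω * γ j ω * A i j else 0) ^ m =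
      gaussianPolyExpectation (Fin n) (quadForm (Matrix.of A) ^ m) / 2 ^ m := by
    simp_rw [hchaos, div_pow, ← map_pow]
    rw [integral_div, integral_eval_eq_gaussianPolyExpectation hmeas hindep hgauss]
  rw [hmoment 4, hmoment 2, gaussianPolyExpectation_quadForm_pow_four hA hdiag',
    gaussianPolyExpectation_quadForm_sq hA hdiag']
  nlinarith [hA.trace_pow_four_le]

theorem stmt12 {Ω : Type*} [MeasureSpace Ω] [IsProbabilityMeasure (ℙ : Measure Ω)]
    {n : ℕ} (γ : Fin n → Ω → ℝ) (hmeas : ∀ i, Measurable (γ i))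
    (hindep : iIndepFun γ ℙ)
    (hgauss : ∀ i, Measure.map (γ i) ℙ = gaussianReal 0 1)
    (A : Fin n → Fin n → ℝ) (hsymm : ∀ i j, A i j = A j i) (hdiag : ∀ i, A i i = 0) :
    (∫ ω, (∑ i, ∑ j, if i < j then γ i ω * γ j ω * A i j else 0) ^ 4) ≤
      15 * (∫ ω, (∑ i, ∑ j, if i < j then γ i ω * γ j ω * A i j else 0) ^ 2) ^ 2 :=
  stmt12_general γ hmeas hindep hgauss A hsymm hdiag
end
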